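/- arXiv:2304.11566 — 2 statements merged into one kernel-verified Lean document; each statement's English description precedes it below -/
import Mathlib

section
/- Let e = [0,1] and k ≥ 4. The second derivative d²/dt² maps (λ0λ1)^3 P_{k−4}(e) bijectively onto the L²-orthogonal complement of P_1(e) in (λ0λ1) P_{k−2}(e); that is, 0 → (λ0λ1)^3 P_{k−4}(e) → (λ0λ1) P_{k−2}(e)/P_1(e) → 0 is exact. -/
/-!
Write `b = λ₀λ₁ = X (1 - X)`. Over a field of characteristic zero, `bⁿ ∣ f` iff `f` and its
first `n - 1` derivatives vanish at `0` and `1`. Hence `(b³u)''` is divisible by `b`, and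
integrating `(b³u)'' q` by parts twice (`q'' = 0` for `q ∈ P₁`) leaves only boundary terms of
`b³u` and `(b³u)'`, which vanish. Conversely, for `g = bp ⊥ P₁` let `F` be the antiderivative of
order two with `F(0) = F'(0) = 0`. Testing against `1` and `t` gives `F'(1) = ∫ g = 0` and
`F(1) = -∫ t g(t) dt = 0`, while `F'' = g` vanishes at both ends, so `F = b³v`. Degree bounds and
uniqueness follow from `deg f'' = deg f - 2` and `deg (b³v) = 6 + deg v`.
-/

open Polynomial

namespace Polynomial

section CommRing

variable {R : Type*} [CommRing R]

theorem natDegree_X_mul_one_sub_X [Nontrivial R] : (X * (1 - X) : R[X]).natDegree = 2 := by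
  rw [show (X * (1 - X) : R[X]) = -(X ^ 2 - X) by ring, natDegree_neg]
  compute_degree!

theorem X_mul_one_sub_X_ne_zero [Nontrivial R] : (X * (1 - X) : R[X]) ≠ 0 := fun h => by
  simpa [h] using natDegree_X_mul_one_sub_X (R := R)

theorem natDegree_X_mul_one_sub_X_pow_mul_le_iff [IsDomain R] {p : R[X]} (n m : ℕ) :
    ((X * (1 - X)) ^ n * p).natDegree ≤ 2 * n + m ↔ p.natDegree ≤ m := by
  rcases eq_or_ne p 0 with rfl | hp
  · simp
  rw [natDegree_mul (pow_ne_zero n X_mul_one_sub_X_ne_zero) hp, natDegree_pow,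
    natDegree_X_mul_one_sub_X]
  omega

theorem dvd_derivative_derivative_X_mul_one_sub_X_pow_mul (n : ℕ) (u : R[X]) :
    (X * (1 - X)) ^ n ∣ derivative (derivative ((X * (1 - X)) ^ (n + 2) * u)) := by
  have := pow_sub_dvd_iterate_derivative_of_pow_dvd 2 (dvd_mul_right ((X * (1 - X)) ^ (n + 2)) u)
  rwa [Nat.add_sub_cancel] at this

end CommRing

section CharZeroField

variable {K : Type*} [Field K] [CharZero K]

theorem derivative_surjective : Function.Surjective (derivative : K[X] → K[X]) := by
  intro p
  induction p using Polynomial.induction_on' with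
  | add p q hp hq =>
    obtain ⟨P, rfl⟩ := hp
    obtain ⟨Q, rfl⟩ := hq
    exact ⟨P + Q, derivative_add⟩
  | monomial n a =>
    refine ⟨monomial (n + 1) (a / (n + 1)), ?_⟩
    rw [derivative_monomial_succ, div_mul_cancel₀ _ (Nat.cast_add_one_ne_zero n)]

theorem exists_derivative_eq_and_eval_eq_zero (p : K[X]) (a : K) :
    ∃ P : K[X], derivative P = p ∧ P.eval a = 0 := by
  obtain ⟨P, rfl⟩ := derivative_surjective p
  exact ⟨P - C (P.eval a), by simp, by simp⟩

theorem natDegree_derivative_derivative (p : K[X]) :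
    (derivative (derivative p)).natDegree = p.natDegree - 2 := by
  simp only [natDegree_derivative]
  omega

theorem X_sub_C_pow_dvd_of_iterate_derivative_eval_eq_zero {p : K[X]} {a : K} {n : ℕ}
    (h : ∀ m < n, (derivative^[m] p).eval a = 0) : (X - C a) ^ n ∣ p := by
  rcases eq_or_ne p 0 with rfl | hp
  · exact dvd_zero _
  rw [← le_rootMultiplicity_iff hp]
  cases n with
  | zero => exact Nat.zero_le _
  | succ n =>
    exact (lt_rootMultiplicity_iff_isRoot_iterate_derivative hp).2 fun m hm => h m (by omega)

theorem X_mul_one_sub_X_pow_dvd_iff {p : K[X]} {n : ℕ} :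
    (X * (1 - X)) ^ n ∣ p ↔
      ∀ m < n, (derivative^[m] p).eval 0 = 0 ∧ (derivative^[m] p).eval 1 = 0 := by
  constructor
  · intro h m hm
    obtain ⟨q, hq⟩ := (pow_dvd_pow _ (by omega : 1 ≤ n - m)).trans
      (pow_sub_dvd_iterate_derivative_of_pow_dvd m h)
    simp [hq]
  · intro h
    have hdvd : X * (1 - X) ∣ (X - C (0 : K)) * (X - C 1) :=
      ⟨-1, by simp only [C_0, C_1, sub_zero]; ring⟩
    have hcop : IsCoprime ((X - C (0 : K)) ^ n) ((X - C 1) ^ n) :=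
      (isCoprime_X_sub_C_of_isUnit_sub (by norm_num)).pow
    calc (X * (1 - X)) ^ n ∣ ((X - C 0) * (X - C 1)) ^ n := pow_dvd_pow_of_dvd hdvd n
      _ = (X - C 0) ^ n * (X - C 1) ^ n := mul_pow _ _ n
      _ ∣ p := hcop.mul_dvd
          (X_sub_C_pow_dvd_of_iterate_derivative_eval_eq_zero fun m hm => (h m hm).1)
          (X_sub_C_pow_dvd_of_iterate_derivative_eval_eq_zero fun m hm => (h m hm).2)

theorem derivative_derivative_X_mul_one_sub_X_pow_mul_injective {n : ℕ} (hn : 2 ≤ n) :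
    Function.Injective fun w : K[X] => derivative (derivative ((X * (1 - X)) ^ n * w)) := by
  intro v w (h : derivative (derivative _) = derivative (derivative _))
  by_contra hvw
  have hdeg := natDegree_derivative_derivative ((X * (1 - X)) ^ n * (v - w))
  rw [mul_sub, map_sub, map_sub, h, sub_self, natDegree_zero,
    ← mul_sub, natDegree_mul (pow_ne_zero n X_mul_one_sub_X_ne_zero) (sub_ne_zero.2 hvw),
    natDegree_pow, natDegree_X_mul_one_sub_X] at hdeg
  omega

theorem natDegree_le_iff_of_derivative_derivative_X_mul_one_sub_X_pow_mul_eq {u p : K[X]}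
    {n : ℕ} (m : ℕ)
    (h : derivative (derivative ((X * (1 - X)) ^ (n + 2) * u)) = (X * (1 - X)) ^ n * p) :
    u.natDegree ≤ m ↔ p.natDegree ≤ m + 2 := by
  rw [← natDegree_X_mul_one_sub_X_pow_mul_le_iff (n + 2) m,
    ← natDegree_X_mul_one_sub_X_pow_mul_le_iff n (m + 2), ← h, natDegree_derivative_derivative]
  omega

end CharZeroField

theorem integral_eval_derivative_derivative_mul {f q : ℝ[X]}
    (hq : derivative (derivative q) = 0) (a b : ℝ) :
    ∫ t in a..b, (derivative (derivative f)).eval t * q.eval t =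
      (derivative f * q - f * derivative q).eval b -
        (derivative f * q - f * derivative q).eval a := by
  have hG : derivative (derivative f * q - f * derivative q) = derivative (derivative f) * q := by
    rw [derivative_sub, derivative_mul, derivative_mul, hq]
    ring
  simp_rw [← eval_mul, ← hG]
  exact intervalIntegral.integral_eq_sub_of_hasDerivAt
    (fun x _ => (derivative f * q - f * derivative q).hasDerivAt x)
    ((Polynomial.continuous _).intervalIntegrable _ _)

theorem integral_derivative_derivative_X_mul_one_sub_X_pow_mul_mul_eq_zero {n : ℕ} (hn : 2 ≤ n)
    (u : ℝ[X]) {q : ℝ[X]} (hq : q.natDegree ≤ 1) :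
    ∫ t in (0 : ℝ)..1,
      (derivative (derivative ((X * (1 - X)) ^ n * u))).eval t * q.eval t = 0 := by
  have hf := (X_mul_one_sub_X_pow_dvd_iff (n := n)).1 (dvd_mul_right _ u)
  set f := (X * (1 - X)) ^ n * u
  obtain ⟨hf0, hf1⟩ : f.eval 0 = 0 ∧ f.eval 1 = 0 := hf 0 (by omega)
  obtain ⟨hf'0, hf'1⟩ : (derivative f).eval 0 = 0 ∧ (derivative f).eval 1 = 0 := hf 1 (by omega)
  rw [integral_eval_derivative_derivative_mul (iterate_derivative_eq_zero (x := 2) (by omega))]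
  simp only [eval_sub, eval_mul, hf0, hf1, hf'0, hf'1]
  ring

theorem exists_derivative_derivative_X_mul_one_sub_X_pow_three_mul_eq {g : ℝ[X]}
    (hg : X * (1 - X) ∣ g)
    (horth : ∀ q : ℝ[X], q.natDegree ≤ 1 → ∫ t in (0 : ℝ)..1, g.eval t * q.eval t = 0) :
    ∃ v : ℝ[X], derivative (derivative ((X * (1 - X)) ^ 3 * v)) = g := by
  obtain ⟨p, rfl⟩ := hg
  obtain ⟨F₁, hF₁, hF₁0⟩ := exists_derivative_eq_and_eval_eq_zero (X * (1 - X) * p) 0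
  obtain ⟨F, hF, hF0⟩ := exists_derivative_eq_and_eval_eq_zero F₁ 0
  have hF'' : derivative (derivative F) = X * (1 - X) * p := by rw [hF, hF₁]
  have hF₁1 : F₁.eval 1 = 0 := by
    have := horth 1 (by simp)
    rw [← hF'', integral_eval_derivative_derivative_mul (by simp)] at this
    simpa [hF, hF₁0] using this
  have hF1 : F.eval 1 = 0 := by
    have := horth X natDegree_X_le
    rw [← hF'', integral_eval_derivative_derivative_mul (by simp)] at this
    simpa [hF, hF₁0, hF0, hF₁1] using this
  obtain ⟨v, rfl⟩ : (X * (1 - X)) ^ 3 ∣ F := X_mul_one_sub_X_pow_dvd_iff.2 fun m hm => by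
    interval_cases m <;> simp [hF, hF₁, hF0, hF1, hF₁0, hF₁1]
  exact ⟨v, hF''⟩

end Polynomial

/-- Exactness of the edge bubble complex
`0 → (λ0λ1)^3 P_{k-4}(e) → (λ0λ1) P_{k-2}(e)/P_1(e) → 0` under `d²/dt²`,
on the edge `e = [0,1]` with `λ0 = 1 - t`, `λ1 = t`. -/
theorem stmt_2 (k : ℕ) (hk : 4 ≤ k) :
    (∀ u1 : Polynomial ℝ, u1.natDegree ≤ k - 4 →
      (∃ p : Polynomial ℝ, p.natDegree ≤ k - 2 ∧
        derivative (derivative ((X * (1 - X)) ^ 3 * u1)) = (X * (1 - X)) * p) ∧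
      (∀ q : Polynomial ℝ, q.natDegree ≤ 1 →
        ∫ t in (0:ℝ)..1,
          (derivative (derivative ((X * (1 - X)) ^ 3 * u1))).eval t * q.eval t = 0)) ∧
    (∀ p : Polynomial ℝ, p.natDegree ≤ k - 2 →
      (∀ q : Polynomial ℝ, q.natDegree ≤ 1 →
        ∫ t in (0:ℝ)..1, ((X * (1 - X)) * p).eval t * q.eval t = 0) →
      ∃! u1 : Polynomial ℝ, u1.natDegree ≤ k - 4 ∧
        derivative (derivative ((X * (1 - X)) ^ 3 * u1)) = (X * (1 - X)) * p) := by
  have hdeg {u p : ℝ[X]}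
      (h : derivative (derivative ((X * (1 - X)) ^ 3 * u)) = X * (1 - X) * p) :
      u.natDegree ≤ k - 4 ↔ p.natDegree ≤ k - 2 := by
    rw [natDegree_le_iff_of_derivative_derivative_X_mul_one_sub_X_pow_mul_eq (n := 1) (k - 4)
      (by rwa [pow_one]), show k - 4 + 2 = k - 2 by omega]
  refine ⟨fun u hu => ?_, fun p hp horth => ?_⟩
  · obtain ⟨p, hp⟩ : X * (1 - X) ∣ derivative (derivative ((X * (1 - X)) ^ 3 * u)) := by
      have := dvd_derivative_derivative_X_mul_one_sub_X_pow_mul 1 u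
      rwa [pow_one] at this
    exact ⟨⟨p, (hdeg hp).1 hu, hp⟩, fun q hq =>
      integral_derivative_derivative_X_mul_one_sub_X_pow_mul_mul_eq_zero (by norm_num) u hq⟩
  · obtain ⟨v, hv⟩ :=
      exists_derivative_derivative_X_mul_one_sub_X_pow_three_mul_eq (dvd_mul_right _ p) horth
    exact ⟨v, ⟨(hdeg hv).2 hp, hv⟩, fun w hw =>
      derivative_derivative_X_mul_one_sub_X_pow_mul_injective (by norm_num) (hw.2.trans hv.symm)⟩
end

section
/- Let f be a nondegenerate triangle in R² and k ≥ 7. If ξ ∈ (λ0λ1λ2) P^{(0)}_{k−3}(f; R²) satisfies rot ξ = 0, then there exists u ∈ (λ0λ1λ2)² P_{k−5}(f) such that ξ = ∇u. -/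
/-!
Integrating the rot-free field `B ξ₁` (where `B = λ₀λ₁λ₂`) monomial by monomial gives a
polynomial potential `u` of degree at most `k + 1`. Every `λᵢ` divides `∇u`. After an affine
change of variables sending `λᵢ` to a coordinate, this forces `u ≡ e (mod λᵢ)` for a constant `e`.
Differentiating `u - e = λᵢ q` across the line `λᵢ = 0` then gives `λᵢ ∣ q`. Any two edges meet at
a vertex, so the three constants agree. The `λᵢ` are pairwise non-associated primes, hence
`B² ∣ u - e`, and comparing degrees gives `deg u₁ ≤ k - 5`.
-/

open MvPolynomial

namespace MvPolynomial

section CommSemiring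

variable {σ R : Type*} [CommSemiring R]

theorem coeff_pderiv_sub_single (p : MvPolynomial σ R) {i : σ} {d : σ →₀ ℕ} (hd : d i ≠ 0) :
    coeff (d - Finsupp.single i 1) (pderiv i p) = coeff d p * d i := by
  have hle : Finsupp.single i 1 ≤ d := Finsupp.single_le_iff.mpr (Nat.one_le_iff_ne_zero.mpr hd)
  rw [coeff_pderiv, tsub_add_cancel_of_le hle, Finsupp.tsub_apply, Finsupp.single_eq_same,
    ← Nat.cast_add_one, Nat.sub_add_cancel (Nat.one_le_iff_ne_zero.mpr hd)]

theorem X_dvd_iff_coeff_eq_zero {i : σ} {p : MvPolynomial σ R} :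
    X i ∣ p ↔ ∀ d : σ →₀ ℕ, d i = 0 → coeff d p = 0 := by
  classical
  rw [X_dvd_iff_modMonomial_eq_zero, MvPolynomial.ext_iff]
  refine forall_congr' fun d => ?_
  by_cases hd : d i = 0
  · rw [coeff_modMonomial_of_not_le _ (by simpa [Finsupp.single_le_iff] using hd)]
    simp [hd]
  · rw [coeff_modMonomial_of_le _ (Finsupp.single_le_iff.mpr (Nat.one_le_iff_ne_zero.mpr hd))]
    simp [hd]

theorem totalDegree_pderiv_le (i : σ) (p : MvPolynomial σ R) :
    (pderiv i p).totalDegree ≤ p.totalDegree - 1 := by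
  refine Finset.sup_le fun d hd => ?_
  have hmem : d + Finsupp.single i 1 ∈ p.support := by
    rw [mem_support_iff, coeff_pderiv] at hd
    exact mem_support_iff.mpr (left_ne_zero_of_mul hd)
  have : (d + Finsupp.single i 1).degree ≤ p.totalDegree := le_totalDegree hmem
  rw [map_add, Finsupp.degree_single] at this
  change d.degree ≤ _
  omega

theorem pderiv_pderiv_comm (i j : σ) (p : MvPolynomial σ R) :
    pderiv i (pderiv j p) = pderiv j (pderiv i p) := by
  classical
  induction p using MvPolynomial.induction_on with
  | C a => simp
  | add p q hp hq => simp [hp, hq]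
  | mul_X p k h =>
    simp only [pderiv_mul, map_add, pderiv_X, h, Pi.single_apply]
    split_ifs <;> simp [add_right_comm]

theorem pderiv_aeval {τ : Type*} [Fintype σ] (t : σ → MvPolynomial τ R) (j : τ)
    (p : MvPolynomial σ R) :
    pderiv j (aeval t p) = ∑ i, aeval t (pderiv i p) * pderiv j (t i) := by
  classical
  induction p using MvPolynomial.induction_on with
  | C a => simp [MvPolynomial.algebraMap_eq]
  | add p q hp hq => simp only [map_add, hp, hq, add_mul, Finset.sum_add_distrib]
  | mul_X p k h =>
    simp only [map_mul, pderiv_mul, aeval_X, h, map_add, pderiv_X, Pi.single_apply, mul_ite,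
      mul_one, mul_zero, apply_ite (aeval t), map_zero, add_mul, Finset.sum_add_distrib,
      ite_mul, zero_mul, Finset.sum_ite_eq, Finset.mem_univ, if_true, Finset.sum_mul]
    congr 1
    exact Finset.sum_congr rfl fun _ _ => mul_right_comm _ _ _

theorem totalDegree_eq_one_of_eval_ne {l : MvPolynomial σ R} (hl : l.totalDegree ≤ 1)
    {x y : σ → R} (hxy : eval x l ≠ eval y l) : l.totalDegree = 1 := by
  refine le_antisymm hl (Nat.one_le_iff_ne_zero.mpr fun h0 => hxy ?_)
  rw [totalDegree_eq_zero_iff_eq_C.mp h0, eval_C, eval_C]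

end CommSemiring

theorem eval_eq_of_dvd_sub_C {σ R : Type*} [CommRing R] {l u : MvPolynomial σ R} {e : R}
    (h : l ∣ u - C e) {x : σ → R} (hx : eval x l = 0) : eval x u = e := by
  obtain ⟨q, hq⟩ := h
  have := congrArg (eval x) hq
  rwa [eval_sub, eval_C, eval_mul, hx, zero_mul, sub_eq_zero] at this

section CharZero

variable {σ R : Type*} [CommRing R] [IsDomain R] [CharZero R]

theorem coeff_eq_zero_of_coeff_pderiv_eq_zero {p : MvPolynomial σ R} {i : σ} {d : σ →₀ ℕ}
    (hd : d i ≠ 0) (h : coeff (d - Finsupp.single i 1) (pderiv i p) = 0) : coeff d p = 0 := by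
  rw [coeff_pderiv_sub_single p hd] at h
  exact (mul_eq_zero.mp h).resolve_right (Nat.cast_ne_zero.mpr hd)

theorem eq_C_of_forall_pderiv_eq_zero {p : MvPolynomial σ R} (h : ∀ i, pderiv i p = 0) :
    p = C (coeff 0 p) := by
  classical
  ext d
  rw [coeff_C]
  split_ifs with hd
  · rw [hd]
  obtain ⟨i, hi⟩ : ∃ i, d i ≠ 0 := by simpa [eq_comm, Finsupp.ext_iff] using hd
  exact coeff_eq_zero_of_coeff_pderiv_eq_zero hi (by rw [h i, coeff_zero])

theorem X_dvd_sub_C_of_X_dvd_pderiv {i : σ} {p : MvPolynomial σ R}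
    (h : ∀ j, j ≠ i → X i ∣ pderiv j p) : X i ∣ p - C (coeff 0 p) := by
  classical
  refine X_dvd_iff_coeff_eq_zero.mpr fun d hdi => ?_
  rw [coeff_sub, coeff_C]
  split_ifs with hd
  · rw [hd, sub_self]
  obtain ⟨j, hj⟩ : ∃ j, d j ≠ 0 := by simpa [eq_comm, Finsupp.ext_iff] using hd
  have hji : j ≠ i := by rintro rfl; exact hj hdi
  rw [sub_zero]
  refine coeff_eq_zero_of_coeff_pderiv_eq_zero hj (X_dvd_iff_coeff_eq_zero.mp (h j hji) _ ?_)
  rw [Finsupp.tsub_apply, hdi, Nat.zero_sub]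

end CharZero

section Field

variable {σ K : Type*} [Field K]

noncomputable def pintegral (i : σ) : MvPolynomial σ K →ₗ[K] MvPolynomial σ K :=
  Finsupp.lsum K (fun d => ((d i : K) + 1)⁻¹ • monomial (d + Finsupp.single i 1)) ∘ₗ
    (AddMonoidAlgebra.coeffLinearEquiv K).toLinearMap

theorem pintegral_monomial (i : σ) (d : σ →₀ ℕ) (a : K) :
    pintegral i (monomial d a) = monomial (d + Finsupp.single i 1) (a / (d i + 1)) := by
  simp [pintegral, smul_monomial, div_eq_inv_mul]

theorem pderiv_pintegral [CharZero K] (i : σ) (p : MvPolynomial σ K) :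
    pderiv i (pintegral i p) = p := by
  classical
  induction p using MvPolynomial.induction_on' with
  | monomial d a =>
    rw [pintegral_monomial, pderiv_monomial, add_tsub_cancel_right, Finsupp.add_apply,
      Finsupp.single_eq_same, Nat.cast_add_one, div_mul_cancel₀ _ (Nat.cast_add_one_ne_zero _)]
  | add p q hp hq => rw [map_add, map_add, hp, hq]

theorem pderiv_pintegral_of_ne {i j : σ} (h : j ≠ i) (p : MvPolynomial σ K) :
    pderiv j (pintegral i p) = pintegral i (pderiv j p) := by
  classical
  induction p using MvPolynomial.induction_on' with
  | monomial d a =>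
    have hdeg : d + Finsupp.single i 1 - Finsupp.single j 1 =
        d - Finsupp.single j 1 + Finsupp.single i 1 := by
      ext x
      simp only [Finsupp.add_apply, Finsupp.tsub_apply, Finsupp.single_apply]
      split_ifs <;> subst_vars <;> first | omega | exact absurd rfl h
    rw [pintegral_monomial, pderiv_monomial, pderiv_monomial, pintegral_monomial, hdeg]
    simp [h, h.symm, div_mul_eq_mul_div]
  | add p q hp hq => rw [map_add, map_add, map_add, map_add, hp, hq]

theorem totalDegree_pintegral_le (i : σ) (p : MvPolynomial σ K) :
    (pintegral i p).totalDegree ≤ p.totalDegree + 1 := by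
  conv_lhs => rw [p.as_sum, map_sum]
  refine totalDegree_finsetSum_le fun d hd => ?_
  rw [pintegral_monomial]
  refine (totalDegree_monomial_le _ _).trans ?_
  have hd : d.degree ≤ p.totalDegree := le_totalDegree hd
  change (d + Finsupp.single i 1).degree ≤ _
  rw [map_add, Finsupp.degree_single]
  exact Nat.add_le_add_right hd 1

theorem exists_pderiv_eq_of_pderiv_one_eq_pderiv_zero [CharZero K]
    {P Q : MvPolynomial (Fin 2) K} (h : pderiv 1 P = pderiv 0 Q) {n : ℕ}
    (hP : P.totalDegree ≤ n) (hQ : Q.totalDegree ≤ n) :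
    ∃ u, pderiv 0 u = P ∧ pderiv 1 u = Q ∧ u.totalDegree ≤ n + 1 := by
  set Q' := Q - pderiv 1 (pintegral 0 P)
  have hQ' : pderiv 0 Q' = 0 := by
    rw [map_sub, pderiv_pderiv_comm, pderiv_pintegral, h, sub_self]
  have hQ'deg : Q'.totalDegree ≤ n := by
    refine (totalDegree_sub _ _).trans (max_le hQ ((totalDegree_pderiv_le _ _).trans ?_))
    have := totalDegree_pintegral_le 0 P
    omega
  refine ⟨pintegral 0 P + pintegral 1 Q', ?_, ?_, ?_⟩
  · rw [map_add, pderiv_pintegral, pderiv_pintegral_of_ne (by decide), hQ', map_zero, add_zero]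
  · rw [map_add, pderiv_pintegral, add_sub_cancel]
  · have h0 := totalDegree_pintegral_le 0 P
    have h1 := totalDegree_pintegral_le 1 Q'
    exact (totalDegree_add _ _).trans (max_le (by omega) (by omega))

theorem prime_of_totalDegree_eq_one {l : MvPolynomial σ K} (hl : l.totalDegree = 1) :
    Prime l := by
  refine (irreducible_of_totalDegree_eq_one hl fun x hx => ?_).prime
  refine isUnit_iff_ne_zero.mpr fun hx0 => ?_
  have : l = 0 := by
    ext d
    simpa [hx0] using hx d
  simp [this] at hl

theorem dvd_of_dvd_pderiv_mul {l q : MvPolynomial σ K} {j : σ} {β : K} (hβ : β ≠ 0)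
    (hl : pderiv j l = C β) (h : l ∣ pderiv j (l * q)) : l ∣ q := by
  rw [pderiv_mul, hl] at h
  have hunit : IsUnit (C β : MvPolynomial σ K) := (Ne.isUnit hβ).map C
  exact hunit.dvd_mul_left.mp ((dvd_add_left (dvd_mul_right l _)).mp h)

theorem exists_eq_C_add_C_mul_X_add_C_mul_X [CharZero K] {l : MvPolynomial (Fin 2) K}
    (hl : l.totalDegree ≤ 1) : ∃ a b c : K, l = C a + C b * X 0 + C c * X 1 := by
  have hconst : ∀ i, ∃ β, pderiv i l = C β := fun i => ⟨_, totalDegree_eq_zero_iff_eq_C.mp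
    (Nat.le_zero.mp ((totalDegree_pderiv_le i l).trans (by omega)))⟩
  obtain ⟨⟨b, hb⟩, ⟨c, hc⟩⟩ := And.intro (hconst 0) (hconst 1)
  set r := l - C b * X 0 - C c * X 1
  have hr : ∀ i, pderiv i r = 0 := by
    intro i
    fin_cases i <;> simp [r, hb, hc, pderiv_X]
  refine ⟨coeff 0 r, b, c, ?_⟩
  rw [← eq_C_of_forall_pderiv_eq_zero hr]
  ring

theorem exists_algEquiv_apply_eq_X_zero {a b c : K} (hbc : b ^ 2 + c ^ 2 ≠ 0) :
    ∃ φ : MvPolynomial (Fin 2) K ≃ₐ[K] MvPolynomial (Fin 2) K,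
      φ (C a + C b * X 0 + C c * X 1) = X 0 := by
  have hs : (C b ^ 2 + C c ^ 2) * C (b ^ 2 + c ^ 2)⁻¹ = (1 : MvPolynomial (Fin 2) K) := by
    rw [← map_pow, ← map_pow, ← map_add, ← C_mul, mul_inv_cancel₀ hbc, C_1]
  -- `g` is the affine change of variables `(x, y) ↦ (a + b x + c y, -c x + b y)`, `f` its inverse.
  let f : MvPolynomial (Fin 2) K →ₐ[K] MvPolynomial (Fin 2) K :=
    aeval ![(C b * (X 0 - C a) - C c * X 1) * C (b ^ 2 + c ^ 2)⁻¹,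
      (C c * (X 0 - C a) + C b * X 1) * C (b ^ 2 + c ^ 2)⁻¹]
  let g : MvPolynomial (Fin 2) K →ₐ[K] MvPolynomial (Fin 2) K :=
    aeval ![C a + C b * X 0 + C c * X 1, C (-c) * X 0 + C b * X 1]
  have hf : f (C a + C b * X 0 + C c * X 1) = X 0 := by
    simp [f, MvPolynomial.algebraMap_eq]
    linear_combination (X 0 - C a) * hs
  refine ⟨AlgEquiv.ofAlgHom f g ?_ ?_, hf⟩
  · refine algHom_ext fun i => ?_
    fin_cases i
    · simpa [g] using hf
    · simp [f, g, MvPolynomial.algebraMap_eq]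
      linear_combination X 1 * hs
  · refine algHom_ext fun i => ?_
    fin_cases i
    · simp [f, g, MvPolynomial.algebraMap_eq]
      linear_combination X 0 * hs
    · simp [f, g, MvPolynomial.algebraMap_eq]
      linear_combination X 1 * hs

theorem exists_dvd_sub_C_of_dvd_pderiv [CharZero K] {a b c : K} (hbc : b ^ 2 + c ^ 2 ≠ 0)
    {u : MvPolynomial (Fin 2) K} (h : ∀ i, C a + C b * X 0 + C c * X 1 ∣ pderiv i u) :
    ∃ e, C a + C b * X 0 + C c * X 1 ∣ u - C e := by
  obtain ⟨φ, hφ⟩ := exists_algEquiv_apply_eq_X_zero (a := a) hbc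
  have hX : ∀ j, j ≠ 0 → X 0 ∣ pderiv j (φ u) := by
    intro j _
    have hφ_aeval : ∀ p, φ p = aeval (fun i => φ (X i)) p :=
      DFunLike.congr_fun (aeval_unique φ.toAlgHom)
    rw [hφ_aeval, pderiv_aeval]
    refine Finset.dvd_sum fun i _ => dvd_mul_of_dvd_left ?_ _
    rw [← hφ_aeval, ← hφ]
    exact map_dvd φ (h i)
  refine ⟨coeff 0 (φ u), ?_⟩
  have := map_dvd φ.symm (X_dvd_sub_C_of_X_dvd_pderiv hX)
  rwa [map_sub, φ.symm_apply_apply, ← MvPolynomial.algebraMap_eq, AlgEquiv.commutes,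
    ← hφ, φ.symm_apply_apply] at this

section LinearOrder

variable [LinearOrder K] [IsStrictOrderedRing K]

theorem exists_sq_dvd_sub_C_of_dvd_pderiv {l u : MvPolynomial (Fin 2) K} (hl : l.totalDegree = 1)
    (h : ∀ i, l ∣ pderiv i u) : ∃ e, l ^ 2 ∣ u - C e := by
  obtain ⟨a, b, c, rfl⟩ := exists_eq_C_add_C_mul_X_add_C_mul_X hl.le
  have hbc : b ≠ 0 ∨ c ≠ 0 := by
    by_contra! h0
    simp [h0.1, h0.2] at hl
  obtain ⟨e, q, hq⟩ := exists_dvd_sub_C_of_dvd_pderiv (by rcases hbc with hb | hc <;> positivity) h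
  have hpderiv : ∀ i, pderiv i u = pderiv i ((C a + C b * X 0 + C c * X 1) * q) := fun i => by
    rw [← hq, map_sub, pderiv_C, sub_zero]
  obtain ⟨r, rfl⟩ : C a + C b * X 0 + C c * X 1 ∣ q := by
    rcases hbc with hb | hc
    · exact dvd_of_dvd_pderiv_mul hb (by simp [pderiv_X]) (hpderiv 0 ▸ h 0)
    · exact dvd_of_dvd_pderiv_mul hc (by simp [pderiv_X]) (hpderiv 1 ▸ h 1)
  exact ⟨e, r, by rw [hq]; ring⟩

theorem exists_sq_prod_dvd_sub_C_of_dvd_pderiv {lam : Fin 3 → MvPolynomial (Fin 2) K}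
    {v : Fin 3 → Fin 2 → K} (hlam : ∀ i, (lam i).totalDegree = 1)
    (heval : ∀ i j, eval (v j) (lam i) = if i = j then 1 else 0) {u : MvPolynomial (Fin 2) K}
    (h : ∀ i j, lam i ∣ pderiv j u) : ∃ e, (lam 0 * lam 1 * lam 2) ^ 2 ∣ u - C e := by
  have hsq : ∀ i j, i ≠ j → lam i ^ 2 ∣ u - C (eval (v j) u) := by
    intro i j hij
    obtain ⟨e, he⟩ := exists_sq_dvd_sub_C_of_dvd_pderiv (hlam i) (h i)
    rwa [eval_eq_of_dvd_sub_C ((dvd_pow_self _ two_ne_zero).trans he) (by simp [heval, hij])]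
  have hrel : ∀ i j, i ≠ j → IsRelPrime (lam i ^ 2) (lam j ^ 2) := by
    intro i j hij
    refine ((prime_of_totalDegree_eq_one (hlam i)).irreducible.isRelPrime_iff_not_dvd.mpr
      fun ⟨q, hq⟩ => ?_).pow_left.pow_right
    simpa [heval, hij] using congrArg (eval (v j)) hq
  have h10 : eval (v 1) u = eval (v 0) u :=
    eval_eq_of_dvd_sub_C ((dvd_pow_self _ two_ne_zero).trans (hsq 2 0 (by decide)))
      (by simp [heval])
  refine ⟨eval (v 0) u, ?_⟩
  rw [mul_pow, mul_pow]
  refine ((hrel 0 2 (by decide)).mul_left (hrel 1 2 (by decide))).mul_dvd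
    ((hrel 0 1 (by decide)).mul_dvd ?_ (hsq 1 0 (by decide))) (hsq 2 0 (by decide))
  simpa [h10] using hsq 0 1 (by decide)

end LinearOrder

end Field

end MvPolynomial

theorem stmt_6_general (k : ℕ) (hk : 7 ≤ k)
    (v : Fin 3 → Fin 2 → ℝ)
    (lam : Fin 3 → MvPolynomial (Fin 2) ℝ)
    (hdeg : ∀ i, (lam i).totalDegree ≤ 1)
    (heval : ∀ i j, eval (v j) (lam i) = if i = j then 1 else 0)
    (ξ1 : Fin 2 → MvPolynomial (Fin 2) ℝ)
    (hξ1 : ∀ i, (ξ1 i).totalDegree ≤ k - 3)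
    (hrot : pderiv 1 (lam 0 * lam 1 * lam 2 * ξ1 0) -
      pderiv 0 (lam 0 * lam 1 * lam 2 * ξ1 1) = 0) :
    ∃ u1 : MvPolynomial (Fin 2) ℝ, u1.totalDegree ≤ k - 5 ∧
      ∀ i, lam 0 * lam 1 * lam 2 * ξ1 i =
        pderiv i ((lam 0 * lam 1 * lam 2) ^ 2 * u1) := by
  have hlam : ∀ i, (lam i).totalDegree = 1 := fun i => by
    obtain ⟨j, hj⟩ := exists_ne i
    exact totalDegree_eq_one_of_eval_ne (hdeg i) (x := v i) (y := v j) (by simp [heval, hj.symm])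
  have hlam0 : ∀ i, lam i ≠ 0 := fun i h0 => by simpa [h0] using hlam i
  set B := lam 0 * lam 1 * lam 2
  have hB0 : B ≠ 0 := by simp [B, hlam0]
  have hB : B.totalDegree = 3 := by
    simp only [B, totalDegree_mul_of_isDomain (mul_ne_zero (hlam0 0) (hlam0 1)) (hlam0 2),
      totalDegree_mul_of_isDomain (hlam0 0) (hlam0 1), hlam]
  have hBξ : ∀ i, (B * ξ1 i).totalDegree ≤ k :=
    fun i => (totalDegree_mul _ _).trans (by have := hξ1 i; omega)
  obtain ⟨u, hu0, hu1, hu⟩ :=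
    exists_pderiv_eq_of_pderiv_one_eq_pderiv_zero (sub_eq_zero.mp hrot) (hBξ 0) (hBξ 1)
  have hgrad : ∀ i, pderiv i u = B * ξ1 i := Fin.forall_fin_two.mpr ⟨hu0, hu1⟩
  have hdvdB : ∀ i, lam i ∣ B := by
    intro i
    fin_cases i <;> simp only [B, Fin.zero_eta, Fin.mk_one, Fin.reduceFinMk]
    exacts [(dvd_mul_right _ _).mul_right _, (dvd_mul_left _ _).mul_right _, dvd_mul_left _ _]
  obtain ⟨e, u1, hu1⟩ := exists_sq_prod_dvd_sub_C_of_dvd_pderiv hlam heval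
    fun i j => hgrad j ▸ (hdvdB i).mul_right _
  refine ⟨u1, ?_, fun i => by rw [← hu1, map_sub, pderiv_C, sub_zero, hgrad]⟩
  rcases eq_or_ne u1 0 with rfl | hu10
  · simp
  have hdeg6 := totalDegree_mul_of_isDomain (pow_ne_zero 2 hB0) hu10
  rw [← hu1, sq, totalDegree_mul_of_isDomain hB0 hB0, hB] at hdeg6
  have := (totalDegree_sub_C_le u e).trans hu
  omega

/-- If `ξ = (λ0λ1λ2) ξ1 ∈ (λ0λ1λ2) P⁰_{k-3}(f; ℝ²)` is rot-free, then
`ξ = ∇u` for some `u ∈ (λ0λ1λ2)² P_{k-5}(f)`. -/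
theorem stmt_6 (k : ℕ) (hk : 7 ≤ k)
    (v : Fin 3 → Fin 2 → ℝ) (hv : AffineIndependent ℝ v)
    (lam : Fin 3 → MvPolynomial (Fin 2) ℝ)
    (hdeg : ∀ i, (lam i).totalDegree ≤ 1)
    (heval : ∀ i j, eval (v j) (lam i) = if i = j then 1 else 0)
    (ξ1 : Fin 2 → MvPolynomial (Fin 2) ℝ)
    (hξ1 : ∀ i, (ξ1 i).totalDegree ≤ k - 3)
    (hξ1v : ∀ i j, eval (v j) (ξ1 i) = 0)
    (hrot : pderiv 1 (lam 0 * lam 1 * lam 2 * ξ1 0) -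
      pderiv 0 (lam 0 * lam 1 * lam 2 * ξ1 1) = 0) :
    ∃ u1 : MvPolynomial (Fin 2) ℝ, u1.totalDegree ≤ k - 5 ∧
      ∀ i, lam 0 * lam 1 * lam 2 * ξ1 i =
        pderiv i ((lam 0 * lam 1 * lam 2) ^ 2 * u1) :=
  stmt_6_general k hk v lam hdeg heval ξ1 hξ1 hrot
end
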